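/- arXiv:1612.00531 — 2 statements merged into one kernel-verified Lean document; each statement's English description precedes it below -/
import Mathlib

section
/- There exists an instance of the revenue maximization problem (a single advertiser, a weighted directed graph with all influence probabilities 1, node incentive costs, cpe = 1 and budget B = 7) on which the cost-agnostic greedy algorithm achieves revenue exactly 3 while the optimal feasible allocation achieves revenue 6; hence the curvature-based approximation bound (1/κ)[1 − ((R−κ)/R)^r] with κ = 1, r = 1, R = 2 (equal to 1/2) is tight. -/
open Finset

/-- Cover sets for the tightness instance: node 0 is `b`. -/
def stmt9cover : Fin 3 → Finset (Fin 6)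
  | 0 => {0, 1, 3}
  | 1 => {0, 1, 2}
  | 2 => {3, 4, 5}

/-- The spread function: size of the covered set. -/
noncomputable def stmt9σ (S : Finset (Fin 3)) : ℝ := ((S.biUnion stmt9cover).card : ℝ)

/-- Incentive costs. -/
noncomputable def stmt9c (v : Fin 3) : ℝ := if v = 0 then 4 else 0

lemma stmt9_card_insert (x : Fin 3) (S : Finset (Fin 3)) :
    ((insert x S).biUnion stmt9cover).card
      = (S.biUnion stmt9cover).card + (stmt9cover x \ S.biUnion stmt9cover).card := by
  rw [Finset.biUnion_insert, ← Finset.card_sdiff_add_card]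
  omega

/-- Tightness instance for the cost-agnostic greedy bound: a single advertiser,
cpe = 1 and budget B = 7, a deterministic spread function σ (monotone submodular),
incentive costs c, on which the cost-agnostic greedy (which starts by picking a
node of maximum singleton revenue and is then stuck) obtains revenue 3, while
the optimum feasible seed set obtains revenue 6.  With lower rank r = 1, upper
rank R = 2 and total curvature κ = 1, the bound
(1/κ)[1 − ((R−κ)/R)^r] = 1/2 is thus tight. -/
theorem stmt9 :
    ∃ (V : Type) (_ : Fintype V) (_ : DecidableEq V)
      (σ : Finset V → ℝ) (c : V → ℝ),
      -- σ is a nonnegative, monotone, submodular spread with σ(∅) = 0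
      (∀ S, 0 ≤ σ S) ∧ σ ∅ = 0 ∧
      (∀ ⦃S T : Finset V⦄, S ⊆ T → σ S ≤ σ T) ∧
      (∀ ⦃S T : Finset V⦄ (x : V), S ⊆ T → x ∉ T →
        σ (insert x T) - σ T ≤ σ (insert x S) - σ S) ∧
      (∀ u, 0 ≤ c u) ∧
      ∃ b : V,
        -- b maximizes singleton revenue, so greedy may pick it first
        (∀ u : V, σ {u} ≤ σ {b}) ∧
        -- {b} is feasible (ρ({b}) ≤ B = 7) and maximal: greedy gets stuck
        (σ {b} + c b ≤ 7) ∧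
        (∀ u : V, u ∉ ({b} : Finset V) →
          ¬ (σ (insert u {b}) + ∑ v ∈ insert u ({b} : Finset V), c v ≤ 7)) ∧
        -- greedy revenue is exactly 3
        σ {b} = 3 ∧
        -- there is a feasible set of revenue 6, and it is optimal
        (∃ T : Finset V, σ T + ∑ v ∈ T, c v ≤ 7 ∧ σ T = 6) ∧
        (∀ S : Finset V, σ S + ∑ v ∈ S, c v ≤ 7 → σ S ≤ 6) := by
  have hb3 : (({0} : Finset (Fin 3)).biUnion stmt9cover).card = 3 := by decide
  refine ⟨Fin 3, inferInstance, inferInstance, stmt9σ, stmt9c,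
    ?_, ?_, ?_, ?_, ?_, 0, ?_, ?_, ?_, ?_, ?_, ?_⟩
  · intro S; unfold stmt9σ; positivity
  · simp [stmt9σ]
  · intro S T h
    unfold stmt9σ
    exact_mod_cast Finset.card_le_card
      (Finset.biUnion_subset_biUnion_of_subset_left _ h)
  · intro S T x hST _
    unfold stmt9σ
    rw [stmt9_card_insert, stmt9_card_insert]
    push_cast
    have h : (stmt9cover x \ T.biUnion stmt9cover).card
        ≤ (stmt9cover x \ S.biUnion stmt9cover).card :=
      Finset.card_le_card (Finset.sdiff_subset_sdiff (le_refl _)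
        (Finset.biUnion_subset_biUnion_of_subset_left _ hST))
    have : ((stmt9cover x \ T.biUnion stmt9cover).card : ℝ)
        ≤ ((stmt9cover x \ S.biUnion stmt9cover).card : ℝ) := by exact_mod_cast h
    linarith
  · intro u; unfold stmt9c; split <;> norm_num
  · intro u
    unfold stmt9σ
    have h : (({u} : Finset (Fin 3)).biUnion stmt9cover).card ≤ 3 := by
      revert u; decide
    rw [hb3]
    exact_mod_cast h
  · unfold stmt9σ stmt9c
    rw [hb3]
    norm_num
  · intro u hu
    simp only [Finset.mem_singleton] at hu
    rw [Finset.sum_insert (by simpa using hu)]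
    have h4 : ∀ u : Fin 3, u ≠ 0 →
        4 ≤ ((insert u ({0} : Finset (Fin 3))).biUnion stmt9cover).card := by decide
    have h4' : (4 : ℝ) ≤ ((insert u ({0} : Finset (Fin 3))).biUnion stmt9cover).card := by
      exact_mod_cast h4 u hu
    simp only [stmt9σ, stmt9c, if_neg hu, Finset.sum_singleton, if_pos rfl]
    intro h
    simp only [if_true] at h
    linarith
  · unfold stmt9σ; rw [hb3]; norm_num
  · refine ⟨{1, 2}, ?_, ?_⟩
    · have h6 : (({1, 2} : Finset (Fin 3)).biUnion stmt9cover).card = 6 := by decide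
      rw [Finset.sum_insert (by decide), Finset.sum_singleton]
      unfold stmt9σ stmt9c
      rw [h6, if_neg (by decide : ¬(2 : Fin 3) = 0), if_neg (by decide : ¬(1 : Fin 3) = 0)]
      norm_num
    · have h6 : (({1, 2} : Finset (Fin 3)).biUnion stmt9cover).card = 6 := by decide
      unfold stmt9σ; rw [h6]; norm_num
  · intro S _
    unfold stmt9σ
    have h : (S.biUnion stmt9cover).card ≤ 6 := by
      simpa using Finset.card_le_card (Finset.subset_univ (S.biUnion stmt9cover))
    exact_mod_cast h
end

section
/- In an independence system (E, C) where every singleton {e} with e ∈ E is independent and where feasibility of a set S_i for advertiser i requires ρ_i(S_i) ≤ B_i with ρ_i monotone, if every advertiser can afford at least one seed (for each i there exists u with ρ_i({u}) ≤ B_i), then the lower rank r of the combined independence system satisfies r ≥ h, where h is the number of advertisers. -/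
open Finset

/-! A maximal independent set `X` either already meets every advertiser (so `|X| ≥ h`) or
uses every vertex (so `|X| ≥ |V| ≥ h`). Otherwise some advertiser `i` has no seeds and
some vertex `u` is unused, and since `{u}` is affordable for `i`, adding `(u, i)` keeps `X`
independent, contradicting maximality. -/

section Allocation

variable {V ι : Type*} [DecidableEq V] [DecidableEq ι]

def seedsOf (X : Finset (V × ι)) (i : ι) : Finset V :=
  (X.filter (fun p => p.2 = i)).image Prod.fst

def IsFeasibleAllocation (ρ : ι → Finset V → ℝ) (B : ι → ℝ) (X : Finset (V × ι)) : Prop :=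
  (∀ i j, i ≠ j → Disjoint (seedsOf X i) (seedsOf X j)) ∧ ∀ i, ρ i (seedsOf X i) ≤ B i

lemma seedsOf_subset_image_fst (X : Finset (V × ι)) (i : ι) : seedsOf X i ⊆ X.image Prod.fst :=
  image_subset_image (filter_subset _ _)

lemma seedsOf_insert (X : Finset (V × ι)) (u : V) (i j : ι) :
    seedsOf (insert (u, i) X) j = if j = i then insert u (seedsOf X j) else seedsOf X j := by
  unfold seedsOf
  rw [filter_insert]
  split_ifs with hij hji hji
  · rw [image_insert]
  · exact absurd hij.symm hji
  · exact absurd hji.symm hij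
  · rfl

lemma seedsOf_eq_empty_iff {X : Finset (V × ι)} {i : ι} : seedsOf X i = ∅ ↔ ∀ p ∈ X, p.2 ≠ i := by
  simp [seedsOf]

lemma IsFeasibleAllocation.insert {ρ : ι → Finset V → ℝ} {B : ι → ℝ} {X : Finset (V × ι)}
    {u : V} {i : ι} (hX : IsFeasibleAllocation ρ B X) (hu : u ∉ X.image Prod.fst)
    (hi : seedsOf X i = ∅) (hρ : ρ i {u} ≤ B i) : IsFeasibleAllocation ρ B (insert (u, i) X) := by
  obtain ⟨hdisj, hbudget⟩ := hX
  have hu_seeds : ∀ j, u ∉ seedsOf X j := fun j hj => hu (seedsOf_subset_image_fst X j hj)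
  refine ⟨fun j k hjk => ?_, fun j => ?_⟩
  · rw [seedsOf_insert, seedsOf_insert]
    split_ifs with hj hk hk
    · exact absurd (hj.trans hk.symm) hjk
    · exact disjoint_insert_left.2 ⟨hu_seeds k, hdisj j k hjk⟩
    · exact disjoint_insert_right.2 ⟨hu_seeds j, hdisj j k hjk⟩
    · exact hdisj j k hjk
  · rw [seedsOf_insert]
    split_ifs with hj
    · subst hj
      rwa [hi, insert_empty]
    · exact hbudget j

lemma card_le_or_exists_unused_of_card_le [Fintype V] [Fintype ι] (X : Finset (V × ι))
    (hV : Fintype.card ι ≤ Fintype.card V) :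
    Fintype.card ι ≤ X.card ∨ ∃ u i, u ∉ X.image Prod.fst ∧ seedsOf X i = ∅ := by
  by_cases hsnd : X.image Prod.snd = univ
  · exact .inl (by simpa [hsnd] using card_image_le (s := X) (f := Prod.snd))
  by_cases hfst : X.image Prod.fst = univ
  · exact .inl (hV.trans (by simpa [hfst] using card_image_le (s := X) (f := Prod.fst)))
  obtain ⟨i, hi⟩ := not_forall.1 (mt eq_univ_iff_forall.2 hsnd)
  obtain ⟨u, hu⟩ := not_forall.1 (mt eq_univ_iff_forall.2 hfst)
  exact .inr ⟨u, i, hu, seedsOf_eq_empty_iff.2 fun p hp hpi => hi (mem_image.2 ⟨p, hp, hpi⟩)⟩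

end Allocation

theorem stmt16_general {V : Type*} [Fintype V] [DecidableEq V] (h : ℕ)
    (hV : h ≤ Fintype.card V)
    (ρ : Fin h → Finset V → ℝ) (B : Fin h → ℝ)
    -- every singleton is independent: no single incentive exceeds any budget
    (hsingle : ∀ (i : Fin h) (u : V), ρ i {u} ≤ B i)
    (C : Finset (V × Fin h) → Prop)
    (hC : ∀ X, C X ↔
      ((∀ i j : Fin h, i ≠ j →
          Disjoint ((X.filter (fun p => p.2 = i)).image Prod.fst)
                   ((X.filter (fun p => p.2 = j)).image Prod.fst)) ∧
       ∀ i : Fin h, ρ i ((X.filter (fun p => p.2 = i)).image Prod.fst) ≤ B i)) :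
    -- every maximal independent set has cardinality at least h,
    -- hence the lower rank r satisfies r ≥ h
    ∀ X : Finset (V × Fin h), C X →
      (∀ e : V × Fin h, e ∉ X → ¬ C (insert e X)) → h ≤ X.card := by
  intro X hX hmax
  have hfeasible : IsFeasibleAllocation ρ B X := (hC X).1 hX
  rcases card_le_or_exists_unused_of_card_le X (by simpa using hV) with hcard | ⟨u, i, hu, hi⟩
  · simpa using hcard
  · have hnew : (u, i) ∉ X := fun hm => hu (mem_image_of_mem _ hm)
    exact absurd ((hC _).2 (hfeasible.insert hu hi (hsingle i u))) (hmax _ hnew)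

theorem stmt16 {V : Type*} [Fintype V] [DecidableEq V] (h : ℕ)
    (hV : h ≤ Fintype.card V)
    (ρ : Fin h → Finset V → ℝ) (B : Fin h → ℝ)
    (hmono : ∀ i, ∀ ⦃S T : Finset V⦄, S ⊆ T → ρ i S ≤ ρ i T)
    (hempty : ∀ i, ρ i ∅ = 0) (hB : ∀ i, 0 ≤ B i)
    -- every singleton is independent: no single incentive exceeds any budget
    (hsingle : ∀ (i : Fin h) (u : V), ρ i {u} ≤ B i)
    (C : Finset (V × Fin h) → Prop)
    (hC : ∀ X, C X ↔
      ((∀ i j : Fin h, i ≠ j →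
          Disjoint ((X.filter (fun p => p.2 = i)).image Prod.fst)
                   ((X.filter (fun p => p.2 = j)).image Prod.fst)) ∧
       ∀ i : Fin h, ρ i ((X.filter (fun p => p.2 = i)).image Prod.fst) ≤ B i)) :
    -- every maximal independent set has cardinality at least h,
    -- hence the lower rank r satisfies r ≥ h
    ∀ X : Finset (V × Fin h), C X →
      (∀ e : V × Fin h, e ∉ X → ¬ C (insert e X)) → h ≤ X.card :=
  stmt16_general h hV ρ B hsingle C hC
end
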